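/- (Convergence corollary under geometrically improving cache accuracy.) Suppose the cache error bounds satisfy κ_{t+1} ≤ β·κ_t for all t, with κ_0 ≥ 0 and 0 ≤ β < 1, and the temperatures satisfy τ_t ≥ τ_min for all t. Then for every t ∈ ℕ: (i) κ_t ≤ β^t·κ_0; (ii) D_KL(π̃_t ∥ π*_t) ≤ 2·(β^t·κ_0 + ε/τ_min); and (iii) limsup_{t→∞} D_KL(π̃_t ∥ π*_t) ≤ 2·ε/τ_min. -/

import Mathlib

/-!
Both Gibbs posteriors are normalizations of positive weights whose logarithms differ
pointwise by at most `δ_t = κ_t + ε / τ_t`: the cache error contributes `κ_t`, the Q-error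
divided by the temperature contributes `ε / τ_t`. Comparing `Σ w'` with `e^{±δ}·Σ w` shows
that the log-partition functions also differ by at most `δ_t`, so every log-ratio of the
normalized distributions is at most `2 δ_t` in absolute value, and so is its average, the
KL divergence. With `κ_t ≤ β^t κ_0` and `τ_t ≥ τ_min` this bound tends to `2 ε / τ_min`.
-/

open Real Filter Topology

section GibbsRatio

variable {A : Type*} [Fintype A] [Nonempty A] {w w' : A → ℝ} {δ : ℝ}

lemma log_sum_le_log_sum_add (hw : ∀ a, 0 < w a) (hw' : ∀ a, 0 < w' a)
    (h : ∀ a, log (w' a) ≤ log (w a) + δ) :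
    log (∑ a, w' a) ≤ log (∑ a, w a) + δ := by
  have hsum : ∑ a, w' a ≤ exp δ * ∑ a, w a := by
    rw [Finset.mul_sum]
    refine Finset.sum_le_sum fun a _ => ?_
    rw [← log_le_log_iff (hw' a) (mul_pos (exp_pos δ) (hw a)),
      log_mul (exp_ne_zero δ) (hw a).ne', log_exp]
    linarith [h a]
  have hpos : 0 < ∑ a, w a := Finset.sum_pos (fun a _ => hw a) Finset.univ_nonempty
  have hpos' : 0 < ∑ a, w' a := Finset.sum_pos (fun a _ => hw' a) Finset.univ_nonempty
  calc log (∑ a, w' a) ≤ log (exp δ * ∑ a, w a) := log_le_log hpos' hsum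
    _ = log (∑ a, w a) + δ := by rw [log_mul (exp_ne_zero δ) hpos.ne', log_exp, add_comm]

lemma abs_log_sum_sub_log_sum_le (hw : ∀ a, 0 < w a) (hw' : ∀ a, 0 < w' a)
    (h : ∀ a, |log (w' a) - log (w a)| ≤ δ) :
    |log (∑ a, w' a) - log (∑ a, w a)| ≤ δ := by
  have hle := log_sum_le_log_sum_add hw hw' fun a => by linarith [(abs_le.1 (h a)).2]
  have hge := log_sum_le_log_sum_add hw' hw fun a => by linarith [(abs_le.1 (h a)).1]
  exact abs_le.2 ⟨by linarith, by linarith⟩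

lemma abs_log_div_normalized_le (hw : ∀ a, 0 < w a) (hw' : ∀ a, 0 < w' a)
    (h : ∀ a, |log (w' a) - log (w a)| ≤ δ) (a : A) :
    |log ((w' a / ∑ b, w' b) / (w a / ∑ b, w b))| ≤ 2 * δ := by
  have hpos : 0 < ∑ b, w b := Finset.sum_pos (fun b _ => hw b) Finset.univ_nonempty
  have hpos' : 0 < ∑ b, w' b := Finset.sum_pos (fun b _ => hw' b) Finset.univ_nonempty
  have hsplit : log ((w' a / ∑ b, w' b) / (w a / ∑ b, w b)) =
      (log (w' a) - log (w a)) - (log (∑ b, w' b) - log (∑ b, w b)) := by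
    rw [log_div (div_pos (hw' a) hpos').ne' (div_pos (hw a) hpos).ne',
      log_div (hw' a).ne' hpos'.ne', log_div (hw a).ne' hpos.ne']
    ring
  rw [hsplit, two_mul]
  exact (abs_sub _ _).trans (add_le_add (h a) (abs_log_sum_sub_log_sum_le hw hw' h))

lemma abs_sum_normalized_mul_le (hw' : ∀ a, 0 < w' a) {f : A → ℝ} {c : ℝ}
    (hf : ∀ a, |f a| ≤ c) :
    |∑ a, (w' a / ∑ b, w' b) * f a| ≤ c := by
  have hpos' : 0 < ∑ b, w' b := Finset.sum_pos (fun b _ => hw' b) Finset.univ_nonempty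
  calc |∑ a, (w' a / ∑ b, w' b) * f a|
      ≤ ∑ a, |(w' a / ∑ b, w' b) * f a| := Finset.abs_sum_le_sum_abs _ _
    _ ≤ ∑ a, (w' a / ∑ b, w' b) * c := by
        refine Finset.sum_le_sum fun a _ => ?_
        rw [abs_mul, abs_of_pos (div_pos (hw' a) hpos')]
        exact mul_le_mul_of_nonneg_left (hf a) (div_pos (hw' a) hpos').le
    _ = c := by rw [← Finset.sum_mul, ← Finset.sum_div, div_self hpos'.ne', one_mul]

lemma abs_kl_normalized_le (hw : ∀ a, 0 < w a) (hw' : ∀ a, 0 < w' a)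
    (h : ∀ a, |log (w' a) - log (w a)| ≤ δ) :
    |∑ a, (w' a / ∑ b, w' b) * log ((w' a / ∑ b, w' b) / (w a / ∑ b, w b))| ≤ 2 * δ :=
  abs_sum_normalized_mul_le hw' (abs_log_div_normalized_le hw hw' h)

end GibbsRatio

lemma abs_log_mul_exp_div_sub_le {x y u v κ ε τ : ℝ} (hx : 0 < x) (hy : 0 < y) (hτ : 0 < τ)
    (hxy : |log x - log y| ≤ κ) (huv : |u - v| ≤ ε) :
    |log (x * exp (u / τ)) - log (y * exp (v / τ))| ≤ κ + ε / τ := by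
  rw [log_mul hx.ne' (exp_ne_zero _), log_mul hy.ne' (exp_ne_zero _), log_exp, log_exp,
    add_sub_add_comm, ← sub_div]
  refine (abs_add_le _ _).trans (add_le_add hxy ?_)
  rw [abs_div, abs_of_pos hτ]
  exact div_le_div_of_nonneg_right huv hτ.le

lemma limsup_le_of_abs_le_of_tendsto {u g : ℕ → ℝ} {L : ℝ} (hug : ∀ n, |u n| ≤ g n)
    (hg : Tendsto g atTop (𝓝 L)) : limsup u atTop ≤ L := by
  obtain ⟨M, hM⟩ := hg.isBoundedUnder_le
  have hbelow : IsBoundedUnder (· ≥ ·) atTop u :=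
    ⟨-M, eventually_map.2 <| (eventually_map.1 hM).mono fun n hn => by
      linarith [neg_abs_le (u n), hug n]⟩
  calc limsup u atTop ≤ limsup g atTop :=
        limsup_le_limsup (Eventually.of_forall fun n => (le_abs_self _).trans (hug n))
          hbelow.isCoboundedUnder_le hg.isBoundedUnder_le
    _ = L := hg.limsup_eq

theorem convergence_corollary_geometric_cache_general
    {A : Type*} [Fintype A] [Nonempty A]
    (p : A → ℝ) (hp : ∀ a, 0 < p a)
    (Qstar : A → ℝ) (ε : ℝ) (hε : 0 ≤ ε) (τmin : ℝ) (hτmin : 0 < τmin)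
    (phat : ℕ → A → ℝ) (hphat : ∀ t a, 0 < phat t a)
    (Q : ℕ → A → ℝ) (τ : ℕ → ℝ) (hτge : ∀ t, τmin ≤ τ t)
    (κ : ℕ → ℝ)
    (hprior : ∀ t a, |Real.log (phat t a) - Real.log (p a)| ≤ κ t)
    (hQ : ∀ t a, |Q t a - Qstar a| ≤ ε)
    (β : ℝ) (hβ0 : 0 ≤ β) (hβ1 : β < 1)
    (hgeom : ∀ t, κ (t + 1) ≤ β * κ t)
    (D : ℕ → ℝ)
    (hD : ∀ t, D t =
      ∑ a, (phat t a * Real.exp (Q t a / τ t) / (∑ b, phat t b * Real.exp (Q t b / τ t))) *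
        Real.log ((phat t a * Real.exp (Q t a / τ t) /
              (∑ b, phat t b * Real.exp (Q t b / τ t))) /
          (p a * Real.exp (Qstar a / τ t) / (∑ b, p b * Real.exp (Qstar b / τ t))))) :
    (∀ t, κ t ≤ β ^ t * κ 0)
    ∧ (∀ t, D t ≤ 2 * (β ^ t * κ 0 + ε / τmin))
    ∧ Filter.limsup D Filter.atTop ≤ 2 * ε / τmin := by
  have hκ_geom : ∀ t, κ t ≤ β ^ t * κ 0 := fun t => le_geom hβ0 t fun k _ => hgeom k
  have hτ : ∀ t, 0 < τ t := fun t => hτmin.trans_le (hτge t)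
  have hD_abs : ∀ t, |D t| ≤ 2 * (β ^ t * κ 0 + ε / τmin) := by
    intro t
    rw [hD t]
    have hlog_weights (a : A) := abs_log_mul_exp_div_sub_le (hphat t a) (hp a) (hτ t)
      (hprior t a) (hQ t a)
    refine (abs_kl_normalized_le (fun a => mul_pos (hp a) (exp_pos _))
      (fun a => mul_pos (hphat t a) (exp_pos _)) hlog_weights).trans ?_
    gcongr
    · exact hκ_geom t
    · exact hτge t
  have hbound_lim :
      Tendsto (fun t => 2 * (β ^ t * κ 0 + ε / τmin)) atTop (𝓝 (2 * ε / τmin)) := by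
    have := ((tendsto_pow_atTop_nhds_zero_of_lt_one hβ0 hβ1).mul_const (κ 0)).add_const
      (ε / τmin) |>.const_mul 2
    rwa [zero_mul, zero_add, ← mul_div_assoc] at this
  exact ⟨hκ_geom, fun t => (le_abs_self _).trans (hD_abs t),
    limsup_le_of_abs_le_of_tendsto hD_abs hbound_lim⟩

/-- **Convergence corollary under geometrically improving cache accuracy.**
If the cache error bounds satisfy `κ_{t+1} ≤ β·κ_t` with `κ_0 ≥ 0`, `0 ≤ β < 1`,
and temperatures satisfy `τ_t ≥ τ_min > 0`, then for every `t`: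
(i) `κ_t ≤ β^t·κ_0`; (ii) `D_KL(π̃_t ∥ π*_t) ≤ 2·(β^t·κ_0 + ε/τ_min)`;
(iii) `limsup_t D_KL(π̃_t ∥ π*_t) ≤ 2·ε/τ_min`. -/
theorem convergence_corollary_geometric_cache
    {A : Type*} [Fintype A] [Nonempty A]
    (p : A → ℝ) (hp : ∀ a, 0 < p a) (hpsum : ∑ a, p a = 1)
    (Qstar : A → ℝ) (ε : ℝ) (hε : 0 ≤ ε) (τmin : ℝ) (hτmin : 0 < τmin)
    (phat : ℕ → A → ℝ) (hphat : ∀ t a, 0 < phat t a)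
    (hphatsum : ∀ t, ∑ a, phat t a = 1)
    (Q : ℕ → A → ℝ) (τ : ℕ → ℝ) (hτ : ∀ t, 0 < τ t) (hτge : ∀ t, τmin ≤ τ t)
    (κ : ℕ → ℝ) (hκ : ∀ t, 0 ≤ κ t)
    (hprior : ∀ t a, |Real.log (phat t a) - Real.log (p a)| ≤ κ t)
    (hQ : ∀ t a, |Q t a - Qstar a| ≤ ε)
    (β : ℝ) (hβ0 : 0 ≤ β) (hβ1 : β < 1) (hκ0 : 0 ≤ κ 0)
    (hgeom : ∀ t, κ (t + 1) ≤ β * κ t)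
    (D : ℕ → ℝ)
    (hD : ∀ t, D t =
      ∑ a, (phat t a * Real.exp (Q t a / τ t) / (∑ b, phat t b * Real.exp (Q t b / τ t))) *
        Real.log ((phat t a * Real.exp (Q t a / τ t) /
              (∑ b, phat t b * Real.exp (Q t b / τ t))) /
          (p a * Real.exp (Qstar a / τ t) / (∑ b, p b * Real.exp (Qstar b / τ t))))) :
    (∀ t, κ t ≤ β ^ t * κ 0)
    ∧ (∀ t, D t ≤ 2 * (β ^ t * κ 0 + ε / τmin))
    ∧ Filter.limsup D Filter.atTop ≤ 2 * ε / τmin :=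
  convergence_corollary_geometric_cache_general p hp Qstar ε hε τmin hτmin phat hphat Q τ hτge κ
    hprior hQ β hβ0 hβ1 hgeom D hD
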